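/- arXiv:2507.08657 — 3 statements merged into one kernel-verified Lean document; each statement's English description precedes it below -/
import Mathlib

section
/- Let W be a standard one-dimensional Brownian motion on [0,T], and τ: [0,T] → [0,T] a continuous non-decreasing time change with τ(t) > t for all t ∈ [0,T) and τ(T) = T. For a partition P of [0,T], define μ_P([0,t]) = Σ_{[u,v]∈P, u≤t} (W(v)−W(u))·(W(τ(v))−W(τ(u))). Then for every t ∈ [0,T], E[μ_P([0,t])²] → 0 as the mesh |P| → 0. -/
/-!
Write `Xᵢ = W(tᵢ₊₁) - W(tᵢ)` and `Yᵢ = W(τ tᵢ₊₁) - W(τ tᵢ)` and expand the square of `∑ Xᵢ Yᵢ`.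
By Cauchy–Schwarz and `E[(W v - W u)⁴] = 3 (v - u)²`, the diagonal terms satisfy
`E[Xᵢ² Yᵢ²] ≤ 3 Δtᵢ Δτᵢ`, which sums to at most `3 · mesh · T`.
For `i < j`, split `Yⱼ` at `M = max tⱼ₊₁ (τ tⱼ)`: the increment `W(τ tⱼ₊₁) - W(M)` is centred and
independent of `Xᵢ, Yᵢ, Xⱼ`, and the remaining increment spans `(tⱼ₊₁ - τ tⱼ)⁺`.
As `τ u - u` is bounded below by some `c > 0` on `[0, T - η]`, that excess vanishes for
mesh `< c` except on intervals inside the last `η + mesh` of `[0, T]`, so the cross terms are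
`O(T (η + mesh))`.
-/

open MeasureTheory ProbabilityTheory
open scoped ENNReal BigOperators

/-- A standard one-dimensional Brownian motion: measurable marginals, Gaussian increments
`W(t) − W(s) ∼ N(0, t−s)`, independent increments, and `W(0) = 0` a.s. -/
def IsBrownianMotion {Ω : Type*} [MeasureSpace Ω] (W : ℝ → Ω → ℝ) : Prop :=
  (∀ t, Measurable (W t)) ∧
  (∀ᵐ ω, W 0 ω = 0) ∧
  (∀ s t : ℝ, 0 ≤ s → s ≤ t →
    Measure.map (fun ω => W t ω - W s ω) ℙ = gaussianReal 0 (t - s).toNNReal) ∧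
  (∀ (n : ℕ) (ts : ℕ → ℝ), Monotone ts → (∀ i, 0 ≤ ts i) →
    iIndepFun
      (fun (i : Fin n) ω => W (ts (i + 1)) ω - W (ts i) ω) ℙ)

open scoped NNReal

theorem Fin.sum_succ_sub_castSucc {M : Type*} [AddCommGroup M] (n : ℕ) (f : Fin (n + 1) → M) :
    ∑ i : Fin n, (f i.succ - f i.castSucc) = f (Fin.last n) - f 0 := by
  induction n with
  | zero => simp
  | succ n ih =>
    rw [Fin.sum_univ_castSucc]
    simp only [Fin.succ_castSucc, ← Fin.castSucc_zero, ih (fun i => f i.castSucc), Fin.succ_last]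
    abel

lemma sum_sub_ite_lt_le {n : ℕ} {t : Fin (n + 1) → ℝ} (ht : Monotone t) {δ x : ℝ}
    (hmesh : ∀ i : Fin n, t i.succ - t i.castSucc ≤ δ) (hx : x - δ ≤ t (Fin.last n)) :
    ∑ i : Fin n, (if x < t i.succ then t i.succ - t i.castSucc else 0)
      ≤ t (Fin.last n) - x + δ := by
  have hterm (i : Fin n) : (if x < t i.succ then t i.succ - t i.castSucc else 0)
      ≤ max (t i.succ) (x - δ) - max (t i.castSucc) (x - δ) := by
    split_ifs with h
    · have := hmesh i
      have := ht (Fin.castSucc_le_succ i)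
      rw [max_eq_left (by linarith), max_eq_left (by linarith)]
    · exact sub_nonneg.2 (max_le_max_right _ (ht (Fin.castSucc_le_succ i)))
  calc _ ≤ ∑ i : Fin n, (max (t i.succ) (x - δ) - max (t i.castSucc) (x - δ)) :=
        Finset.sum_le_sum fun i _ => hterm i
    _ = max (t (Fin.last n)) (x - δ) - max (t 0) (x - δ) :=
        Fin.sum_succ_sub_castSucc n fun i => max (t i) (x - δ)
    _ ≤ t (Fin.last n) - x + δ := by
        rw [max_eq_left hx]
        linarith [le_max_right (t 0) (x - δ)]

lemma sum_sqrt_mul_sub_le {n : ℕ} {t s : Fin (n + 1) → ℝ} (ht : Monotone t) (hs : Monotone s) :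
    ∑ i : Fin n, √((t i.succ - t i.castSucc) * (s i.succ - s i.castSucc))
      ≤ √((t (Fin.last n) - t 0) * (s (Fin.last n) - s 0)) := by
  have hinc {f : Fin (n + 1) → ℝ} (hf : Monotone f) (i : Fin n) : 0 ≤ f i.succ - f i.castSucc :=
    sub_nonneg.2 (hf (Fin.castSucc_le_succ i))
  simp_rw [Real.sqrt_mul (hinc ht _), ← Fin.sum_succ_sub_castSucc,
    Real.sqrt_mul (Finset.sum_nonneg fun i _ => hinc ht i)]
  exact Real.sum_sqrt_mul_sqrt_le _ (hinc ht) (hinc hs)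

lemma sum_mul_sub_le {n : ℕ} {t s : Fin (n + 1) → ℝ} (hs : Monotone s) {δ : ℝ}
    (hmesh : ∀ i : Fin n, t i.succ - t i.castSucc ≤ δ) :
    ∑ i : Fin n, (t i.succ - t i.castSucc) * (s i.succ - s i.castSucc)
      ≤ δ * (s (Fin.last n) - s 0) := by
  rw [← Fin.sum_succ_sub_castSucc, Finset.mul_sum]
  exact Finset.sum_le_sum fun i _ =>
    mul_le_mul_of_nonneg_right (hmesh i) (sub_nonneg.2 (hs (Fin.castSucc_le_succ i)))

lemma sum_sqrt_mul_excess_le {T η δ : ℝ} {τ : ℝ → ℝ} (hτle : ∀ u ∈ Set.Icc 0 T, u ≤ τ u)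
    (hgap : ∀ u ∈ Set.Icc 0 (T - η), δ ≤ τ u - u) (hηδ : 0 ≤ η + δ)
    {n : ℕ} {t : Fin (n + 1) → ℝ} (ht : Monotone t) (ht0 : t 0 = 0) (htT : t (Fin.last n) = T)
    (hmesh : ∀ i : Fin n, t i.succ - t i.castSucc ≤ δ) :
    ∑ i : Fin n, √((t i.succ - t i.castSucc) *
      (max (t i.succ) (τ (t i.castSucc)) - τ (t i.castSucc))) ≤ η + δ := by
  have hterm (i : Fin n) : √((t i.succ - t i.castSucc) *
      (max (t i.succ) (τ (t i.castSucc)) - τ (t i.castSucc)))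
      ≤ if T - η < t i.succ then t i.succ - t i.castSucc else 0 := by
    have hl : 0 ≤ t i.succ - t i.castSucc := sub_nonneg.2 (ht (Fin.castSucc_le_succ i))
    have ht0i : 0 ≤ t i.castSucc := ht0 ▸ ht (Fin.zero_le _)
    split_ifs with h
    · have hle : max (t i.succ) (τ (t i.castSucc)) - τ (t i.castSucc)
          ≤ t i.succ - t i.castSucc := by
        have := hτle _ ⟨ht0i, htT ▸ ht (Fin.le_last _)⟩
        rw [sub_le_iff_le_add]
        exact max_le (by linarith) (by linarith)
      calc _ ≤ √((t i.succ - t i.castSucc) * (t i.succ - t i.castSucc)) :=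
            Real.sqrt_le_sqrt (mul_le_mul_of_nonneg_left hle hl)
        _ = _ := Real.sqrt_mul_self hl
    · have hgap_i := hgap _ ⟨ht0i, (ht (Fin.castSucc_le_succ i)).trans (not_lt.1 h)⟩
      have := hmesh i
      rw [max_eq_right (by linarith), sub_self, mul_zero, Real.sqrt_zero]
  calc _ ≤ ∑ i : Fin n, (if T - η < t i.succ then t i.succ - t i.castSucc else 0) :=
        Finset.sum_le_sum fun i _ => hterm i
    _ ≤ t (Fin.last n) - (T - η) + δ := sum_sub_ite_lt_le ht hmesh (by linarith)
    _ = η + δ := by rw [htT]; ring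

lemma hasDerivAt_mul_exp_sq (v : ℝ) {p : ℝ → ℝ} {d t : ℝ} (hp : HasDerivAt p d t) :
    HasDerivAt (fun t => p t * Real.exp (v * t ^ 2 / 2))
      ((d + v * t * p t) * Real.exp (v * t ^ 2 / 2)) t :=
  (hp.fun_mul (((hasDerivAt_pow 2 t).const_mul v).div_const 2).exp).congr_deriv
    (by push_cast; ring)

lemma iteratedDeriv_four_exp_sq (v : ℝ) :
    iteratedDeriv 4 (fun t => Real.exp (v * t ^ 2 / 2)) 0 = 3 * v ^ 2 := by
  have d1 : deriv (fun t => Real.exp (v * t ^ 2 / 2))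
      = fun t => v * t * Real.exp (v * t ^ 2 / 2) := by
    ext t
    simpa using (hasDerivAt_mul_exp_sq v (hasDerivAt_const t (1 : ℝ))).deriv
  have d2 : deriv (fun t => v * t * Real.exp (v * t ^ 2 / 2))
      = fun t => (v + v ^ 2 * t ^ 2) * Real.exp (v * t ^ 2 / 2) := by
    ext t
    exact (hasDerivAt_mul_exp_sq v ((hasDerivAt_id t).const_mul v)).deriv.trans (by simp; ring)
  have d3 : deriv (fun t => (v + v ^ 2 * t ^ 2) * Real.exp (v * t ^ 2 / 2))
      = fun t => (3 * v ^ 2 * t + v ^ 3 * t ^ 3) * Real.exp (v * t ^ 2 / 2) := by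
    ext t
    exact (hasDerivAt_mul_exp_sq v
      (((hasDerivAt_pow 2 t).const_mul (v ^ 2)).const_add v)).deriv.trans (by push_cast; ring)
  have d4 : deriv (fun t => (3 * v ^ 2 * t + v ^ 3 * t ^ 3) * Real.exp (v * t ^ 2 / 2)) 0
      = 3 * v ^ 2 :=
    (hasDerivAt_mul_exp_sq v (((hasDerivAt_id (0 : ℝ)).const_mul (3 * v ^ 2)).add
      ((hasDerivAt_pow 3 (0 : ℝ)).const_mul (v ^ 3)))).deriv.trans (by simp)
  simp only [iteratedDeriv_succ', iteratedDeriv_zero, d1, d2, d3, d4]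

lemma integral_pow_four_gaussianReal (v : ℝ≥0) :
    ∫ x, x ^ 4 ∂gaussianReal 0 v = 3 * (v : ℝ) ^ 2 := by
  have h := iteratedDeriv_mgf_zero (X := fun x : ℝ => x) (μ := gaussianReal 0 v) (by simp) 4
  simp only [mgf_fun_id_gaussianReal, zero_mul, zero_add, iteratedDeriv_four_exp_sq] at h
  exact h.symm

instance ENNReal.holderTriple_four_four_two : ENNReal.HolderTriple 4 4 2 :=
  ⟨by rw [← two_mul, show (4 : ℝ≥0∞) = 2 * 2 by norm_num, ENNReal.mul_inv (by simp) (by simp),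
    ← mul_assoc, ENNReal.mul_inv_cancel (by simp) (by simp), one_mul]⟩

section CauchySchwarz

variable {α : Type*} [MeasurableSpace α] {μ : Measure α} {f g : α → ℝ}

lemma abs_integral_mul_le_sqrt_mul_sqrt (hf : MemLp f 2 μ) (hg : MemLp g 2 μ) :
    |∫ a, f a * g a ∂μ| ≤ √(∫ a, f a ^ 2 ∂μ) * √(∫ a, g a ^ 2 ∂μ) := by
  have hp : ENNReal.ofReal 2 = 2 := by norm_num
  have holder := integral_mul_norm_le_Lp_mul_Lq Real.HolderConjugate.two_two
    (hp ▸ hf) (hp ▸ hg)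
  simp only [Real.norm_eq_abs, Real.rpow_two, sq_abs, ← Real.sqrt_eq_rpow] at holder
  calc |∫ a, f a * g a ∂μ| ≤ ∫ a, |f a| * |g a| ∂μ := by
        simpa only [abs_mul] using abs_integral_le_integral_abs (f := fun a => f a * g a)
    _ ≤ _ := holder

lemma integral_sq_mul_le (hf : MemLp f 4 μ) (hg : MemLp g 4 μ) :
    ∫ a, (f a * g a) ^ 2 ∂μ ≤ √(∫ a, f a ^ 4 ∂μ) * √(∫ a, g a ^ 4 ∂μ) := by
  have hsq {h : α → ℝ} (hh : MemLp h 4 μ) : MemLp (fun a => h a ^ 2) 2 μ := by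
    simp only [sq]
    exact hh.mul (r := 2) hh
  have := abs_integral_mul_le_sqrt_mul_sqrt (hsq hf) (hsq hg)
  simp only [← pow_mul, ← mul_pow] at this
  exact (le_abs_self _).trans this

end CauchySchwarz

lemma integral_sq_sum_le {α ι : Type*} [MeasurableSpace α] {μ : Measure α} [Fintype ι]
    [LinearOrder ι] {Z : ι → α → ℝ} (hZ : ∀ i j, Integrable (fun a => Z i a * Z j a) μ)
    {D u v : ι → ℝ} (hu : ∀ i, 0 ≤ u i) (hv : ∀ i, 0 ≤ v i)
    (hdiag : ∀ i, ∫ a, Z i a * Z i a ∂μ ≤ D i)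
    (hoff : ∀ i j, i < j → ∫ a, Z i a * Z j a ∂μ ≤ u i * v j) :
    ∫ a, (∑ i, Z i a) ^ 2 ∂μ ≤ ∑ i, D i + 2 * (∑ i, u i) * (∑ i, v i) := by
  have hpair (i j : ι) : ∫ a, Z i a * Z j a ∂μ
      ≤ (if i = j then D i else 0) + (u i * v j + u j * v i) := by
    rcases lt_trichotomy i j with hij | rfl | hij
    · simp only [hij.ne, if_false]
      nlinarith [hoff i j hij, mul_nonneg (hu j) (hv i)]
    · simp only [if_true]
      nlinarith [hdiag i, mul_nonneg (hu i) (hv i)]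
    · simp only [hij.ne', if_false]
      simp_rw [mul_comm (Z i _)]
      nlinarith [hoff j i hij, mul_nonneg (hu i) (hv j)]
  calc ∫ a, (∑ i, Z i a) ^ 2 ∂μ = ∑ i, ∑ j, ∫ a, Z i a * Z j a ∂μ := by
        simp_rw [sq, Finset.sum_mul_sum]
        rw [integral_finsetSum _ fun i _ => integrable_finsetSum _ fun j _ => hZ i j]
        exact Finset.sum_congr rfl fun i _ => integral_finsetSum _ fun j _ => hZ i j
    _ ≤ ∑ i, ∑ j, ((if i = j then D i else 0) + (u i * v j + u j * v i)) :=
        Finset.sum_le_sum fun i _ => Finset.sum_le_sum fun j _ => hpair i j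
    _ = ∑ i, D i + 2 * (∑ i, u i) * (∑ i, v i) := by
        simp only [Finset.sum_add_distrib, Finset.sum_ite_eq, Finset.mem_univ, if_true]
        rw [Finset.sum_comm (f := fun i j => u j * v i), ← Finset.sum_mul_sum]
        ring

namespace IsBrownianMotion

variable {Ω : Type*} [MeasureSpace Ω] {W : ℝ → Ω → ℝ} {a b A B : ℝ}

lemma measurable_sub (hW : IsBrownianMotion W) (a b : ℝ) :
    Measurable fun ω => W b ω - W a ω :=
  (hW.1 b).sub (hW.1 a)

lemma integral_comp_sub (hW : IsBrownianMotion W) (ha : 0 ≤ a) (hab : a ≤ b) {g : ℝ → ℝ}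
    (hg : AEStronglyMeasurable g (gaussianReal 0 (b - a).toNNReal)) :
    ∫ ω, g (W b ω - W a ω) = ∫ x, g x ∂gaussianReal 0 (b - a).toNNReal := by
  rw [← hW.2.2.1 a b ha hab, integral_map (hW.measurable_sub a b).aemeasurable]
  rwa [hW.2.2.1 a b ha hab]

lemma memLp_sub (hW : IsBrownianMotion W) (ha : 0 ≤ a) (hab : a ≤ b) {p : ℝ≥0∞} (hp : p ≠ ∞) :
    MemLp (fun ω => W b ω - W a ω) p ℙ := by
  have := memLp_id_gaussianReal' (μ := 0) (v := (b - a).toNNReal) p hp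
  rw [← hW.2.2.1 a b ha hab] at this
  exact (memLp_map_measure_iff aestronglyMeasurable_id (hW.measurable_sub a b).aemeasurable).1 this

lemma integral_sub (hW : IsBrownianMotion W) (ha : 0 ≤ a) (hab : a ≤ b) :
    ∫ ω, (W b ω - W a ω) = 0 := by
  simpa using hW.integral_comp_sub ha hab (g := id) aestronglyMeasurable_id

lemma integral_sub_pow_four (hW : IsBrownianMotion W) (ha : 0 ≤ a) (hab : a ≤ b) :
    ∫ ω, (W b ω - W a ω) ^ 4 = 3 * (b - a) ^ 2 := by
  rw [hW.integral_comp_sub ha hab (g := fun x => x ^ 4) (by fun_prop),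
    integral_pow_four_gaussianReal, Real.coe_toNNReal _ (sub_nonneg.2 hab)]

lemma memLp_mul_sub (hW : IsBrownianMotion W) (ha : 0 ≤ a) (hab : a ≤ b) (hA : 0 ≤ A)
    (hAB : A ≤ B) : MemLp (fun ω => (W b ω - W a ω) * (W B ω - W A ω)) 2 ℙ :=
  (hW.memLp_sub hA hAB (p := 4) (by simp)).mul (hW.memLp_sub ha hab (p := 4) (by simp))

lemma integral_sq_mul_sub_le (hW : IsBrownianMotion W) (ha : 0 ≤ a) (hab : a ≤ b) (hA : 0 ≤ A)
    (hAB : A ≤ B) :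
    ∫ ω, ((W b ω - W a ω) * (W B ω - W A ω)) ^ 2 ≤ 3 * ((b - a) * (B - A)) := by
  have h := integral_sq_mul_le (hW.memLp_sub ha hab (p := 4) (by simp))
    (hW.memLp_sub hA hAB (p := 4) (by simp))
  rwa [hW.integral_sub_pow_four ha hab, hW.integral_sub_pow_four hA hAB,
    ← Real.sqrt_mul (by positivity),
    show 3 * (b - a) ^ 2 * (3 * (B - A) ^ 2) = (3 * ((b - a) * (B - A))) ^ 2 by ring,
    Real.sqrt_sq (by nlinarith [mul_nonneg (sub_nonneg.2 hab) (sub_nonneg.2 hAB)])] at h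

lemma indepFun_sub_of_monotone (hW : IsBrownianMotion W) {ts : ℕ → ℝ} (hts : Monotone ts)
    (hts0 : ∀ i, 0 ≤ ts i) (m : ℕ) :
    IndepFun (fun ω (j : Fin (m + 1)) => W (ts j) ω - W (ts 0) ω)
      (fun ω => W (ts (m + 1)) ω - W (ts m) ω) ℙ := by
  classical
  set F : Fin (m + 1) → Ω → ℝ := fun i ω => W (ts (i + 1)) ω - W (ts i) ω
  have hF := (hW.2.2.2 (m + 1) ts hts hts0).indepFun_finset {Fin.last m}ᶜ {Fin.last m}
    disjoint_compl_left (fun i => hW.measurable_sub _ _)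
  set S : Finset (Fin (m + 1)) := {Fin.last m}ᶜ
  have partial_sum (j : Fin (m + 1)) (ω : Ω) :
      ∑ i : S, (if ((i : Fin (m + 1)) : ℕ) < j then F i ω else 0)
        = W (ts j) ω - W (ts 0) ω := by
    rw [Finset.sum_coe_sort S (fun i => if (i : ℕ) < j then F i ω else 0),
      Finset.sum_subset (Finset.subset_univ S) (fun i _ hi => by
        simp [S] at hi; simp [hi, Nat.not_lt.2 (Nat.le_of_lt_succ j.isLt)]),
      Fin.sum_univ_eq_sum_range (fun k => if k < j then W (ts (k + 1)) ω - W (ts k) ω else 0),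
      ← Finset.sum_filter,
      show (Finset.range (m + 1)).filter (· < (j : ℕ)) = Finset.range j by
        ext k; simp only [Finset.mem_filter, Finset.mem_range]; omega,
      Finset.sum_range_sub (fun k => W (ts k) ω)]
  have hΦ : Measurable fun (v : S → ℝ) (j : Fin (m + 1)) =>
      ∑ i : S, if ((i : Fin (m + 1)) : ℕ) < j then v i else 0 := by
    refine measurable_pi_lambda _ fun j => Finset.measurable_sum _ fun i _ => ?_
    split_ifs
    · exact measurable_pi_apply i
    · exact measurable_const
  have := hF.comp hΦ (measurable_pi_apply ⟨Fin.last m, Finset.mem_singleton_self _⟩)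
  convert this using 1
  · ext ω j
    exact (partial_sum j ω).symm
  · ext ω
    simp

lemma indepFun_sub_of_le (hW : IsBrownianMotion W) {m : ℕ} (w : Fin m → ℝ) {c d : ℝ}
    (hc : 0 ≤ c) (hw : ∀ x, w x ∈ Set.Icc 0 c) (hcd : c ≤ d) :
    IndepFun (fun ω (xy : Fin m × Fin m) => W (w xy.1) ω - W (w xy.2) ω)
      (fun ω => W d ω - W c ω) ℙ := by
  set σ := Tuple.sort w
  -- the grid: the values of `w` in increasing order, then `c`, then `d` forever
  set ts : ℕ → ℝ := fun j => if h : j < m then w (σ ⟨j, h⟩) else if j = m then c else d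
  have hts_lt (j : Fin m) : ts j = w (σ j) := by simp [ts]
  have hmono : Monotone ts := by
    refine monotone_nat_of_le_succ fun j => ?_
    simp only [ts]
    split_ifs <;> first
      | exact Tuple.monotone_sort w (Fin.mk_le_mk.2 (Nat.le_succ j))
      | exact (hw _).2 | exact (hw _).2.trans hcd | exact hcd | exact le_rfl | omega
  have hnonneg (j : ℕ) : 0 ≤ ts j := by
    simp only [ts]; split_ifs
    · exact (hw _).1
    · exact hc
    · exact hc.trans hcd
  have hind := hW.indepFun_sub_of_monotone hmono hnonneg m
  have hΦ : Measurable fun (v : Fin (m + 1) → ℝ) (xy : Fin m × Fin m) =>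
      v (σ.symm xy.1).castSucc - v (σ.symm xy.2).castSucc := by fun_prop
  have := hind.comp hΦ measurable_id
  convert this using 1
  · ext ω xy
    simp [hts_lt]
  · ext ω
    simp [ts]

lemma abs_integral_mul_mul_sub_le (hW : IsBrownianMotion W) {a' b' A' B' : ℝ} (ha : 0 ≤ a)
    (hab : a ≤ b) (hba' : b ≤ a') (ha'b' : a' ≤ b') (hb'B' : b' ≤ B') (hA : 0 ≤ A) (hAB : A ≤ B)
    (hBA' : B ≤ A') (hA'B' : A' ≤ B') :
    |∫ ω, (W b ω - W a ω) * (W B ω - W A ω) * ((W b' ω - W a' ω) * (W B' ω - W A' ω))|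
      ≤ 3 * (√((b - a) * (B - A)) * √((b' - a') * (max b' A' - A'))) := by
  set M := max b' A'
  have hA'M : A' ≤ M := le_max_right _ _
  have hMB' : M ≤ B' := max_le hb'B' hA'B'
  have ha' : 0 ≤ a' := ha.trans (hab.trans hba')
  have hA' : 0 ≤ A' := hA.trans (hAB.trans hBA')
  set P := fun ω => (W b ω - W a ω) * (W B ω - W A ω)
  set U := fun ω => (W b' ω - W a' ω) * (W M ω - W A' ω)
  set V := fun ω => (W b' ω - W a' ω) * (W B' ω - W M ω)
  have hP : MemLp P 2 ℙ := hW.memLp_mul_sub ha hab hA hAB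
  have hU : MemLp U 2 ℙ := hW.memLp_mul_sub ha' ha'b' hA' hA'M
  have hV : MemLp V 2 ℙ := hW.memLp_mul_sub ha' ha'b' (hA'.trans hA'M) hMB'
  have hsplit : (fun ω => P ω * ((W b' ω - W a' ω) * (W B' ω - W A' ω))) = P * U + P * V := by
    ext ω
    simp only [P, U, V, Pi.add_apply, Pi.mul_apply]
    ring
  have hindep : ∫ ω, (P * V) ω = 0 := by
    have hw : ∀ x, ![a, b, A, B, a', b'] x ∈ Set.Icc 0 M := by
      simp only [Fin.forall_fin_succ, Set.mem_Icc, Matrix.cons_val_zero, Matrix.cons_val_succ,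
        IsEmpty.forall_iff, and_true]
      and_intros <;> linarith [le_max_left b' A']
    have hind : IndepFun (fun ω => P ω * (W b' ω - W a' ω)) (fun ω => W B' ω - W M ω) ℙ := by
      exact (hW.indepFun_sub_of_le ![a, b, A, B, a', b'] (hA'.trans hA'M) hw hMB').comp
        (φ := fun v => v (1, 0) * v (3, 2) * v (5, 4)) (by fun_prop) measurable_id
    have := hind.integral_fun_mul_eq_mul_integral
      (((hW.measurable_sub a b).mul (hW.measurable_sub A B)).mul
        (hW.measurable_sub a' b')).aestronglyMeasurable
      (hW.measurable_sub M B').aestronglyMeasurable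
    rw [hW.integral_sub (hA'.trans hA'M) hMB', mul_zero] at this
    simpa only [mul_assoc, Pi.mul_apply] using this
  show |∫ ω, P ω * ((W b' ω - W a' ω) * (W B' ω - W A' ω))| ≤ _
  rw [hsplit, integral_add' (hP.integrable_mul hU) (hP.integrable_mul hV), hindep, add_zero]
  calc |∫ ω, (P * U) ω| ≤ √(∫ ω, P ω ^ 2) * √(∫ ω, U ω ^ 2) :=
        abs_integral_mul_le_sqrt_mul_sqrt hP hU
    _ ≤ √(3 * ((b - a) * (B - A))) * √(3 * ((b' - a') * (M - A'))) := by
        gcongr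
        exacts [hW.integral_sq_mul_sub_le ha hab hA hAB,
          hW.integral_sq_mul_sub_le ha' ha'b' hA' hA'M]
    _ = 3 * (√((b - a) * (B - A)) * √((b' - a') * (M - A'))) := by
        have h3 : (0 : ℝ) ≤ 3 := by norm_num
        rw [Real.sqrt_mul h3, Real.sqrt_mul h3]
        linear_combination (√((b - a) * (B - A)) * √((b' - a') * (M - A'))) *
          Real.mul_self_sqrt h3

lemma integral_sq_sum_cross_le (hW : IsBrownianMotion W) {T η δ : ℝ} {τ : ℝ → ℝ}
    (hτmono : MonotoneOn τ (Set.Icc 0 T))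
    (hτle : ∀ u ∈ Set.Icc 0 T, u ≤ τ u) (hτmaps : ∀ u ∈ Set.Icc 0 T, τ u ∈ Set.Icc 0 T)
    (hgap : ∀ u ∈ Set.Icc 0 (T - η), δ ≤ τ u - u) (hη : 0 ≤ η) (hδ : 0 ≤ δ)
    {n : ℕ} {t : Fin (n + 1) → ℝ} (ht : Monotone t) (ht0 : t 0 = 0) (htT : t (Fin.last n) = T)
    (hmesh : ∀ i : Fin n, t i.succ - t i.castSucc ≤ δ) (s : ℝ) :
    ∫ ω, (∑ i : Fin n, if t i.castSucc ≤ s then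
        (W (t i.succ) ω - W (t i.castSucc) ω) * (W (τ (t i.succ)) ω - W (τ (t i.castSucc)) ω)
      else 0) ^ 2 ≤ 3 * δ * T + 6 * T * (η + δ) := by
  have hmem (j : Fin (n + 1)) : t j ∈ Set.Icc 0 T :=
    ⟨ht0 ▸ ht (Fin.zero_le j), htT ▸ ht (Fin.le_last j)⟩
  have hτt : Monotone (τ ∘ t) := fun i j hij => hτmono (hmem i) (hmem j) (ht hij)
  have hinc {f : Fin (n + 1) → ℝ} (hf : Monotone f) (i : Fin n) : f i.castSucc ≤ f i.succ :=
    hf (Fin.castSucc_le_succ i)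
  have hZ (i : Fin n) : MemLp (fun ω => if t i.castSucc ≤ s then
      (W (t i.succ) ω - W (t i.castSucc) ω) * (W (τ (t i.succ)) ω - W (τ (t i.castSucc)) ω)
      else 0) 2 ℙ := by
    split_ifs
    · exact hW.memLp_mul_sub (hmem _).1 (hinc ht i) (hτmaps _ (hmem _)).1 (hinc hτt i)
    · exact MemLp.zero
  refine (integral_sq_sum_le (fun i j => (hZ i).integrable_mul (hZ j))
    (D := fun i => 3 * ((t i.succ - t i.castSucc) * (τ (t i.succ) - τ (t i.castSucc))))
    (u := fun i => 3 * √((t i.succ - t i.castSucc) * (τ (t i.succ) - τ (t i.castSucc))))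
    (v := fun i => √((t i.succ - t i.castSucc) *
      (max (t i.succ) (τ (t i.castSucc)) - τ (t i.castSucc))))
    (fun i => by positivity) (fun i => by positivity) ?diag ?off).trans ?sum
  case diag =>
    intro i
    split_ifs
    · simpa only [← sq, Function.comp_apply] using hW.integral_sq_mul_sub_le (hmem _).1 (hinc ht i)
        (hτmaps _ (hmem _)).1 (hinc hτt i)
    · simpa using mul_nonneg (sub_nonneg.2 (hinc ht i)) (sub_nonneg.2 (hinc hτt i))
  case off =>
    intro i j hij
    have hij' : i.succ ≤ j.castSucc := Fin.succ_le_castSucc_iff.2 hij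
    split_ifs
    · refine (le_abs_self _).trans ((hW.abs_integral_mul_mul_sub_le (hmem _).1 (hinc ht i)
        (ht hij') (hinc ht j) (hτle _ (hmem _)) (hτmaps _ (hmem _)).1 (hinc hτt i) (hτt hij')
        (hinc hτt j)).trans_eq ?_)
      simp only [Function.comp_apply, mul_assoc]
    all_goals simp only [mul_zero, zero_mul, integral_zero]; positivity
  case sum =>
    have hT : 0 ≤ T := (hmem 0).2.trans' (hmem 0).1
    have hτT0 : τ T - τ 0 ≤ T := by
      linarith [(hτmaps 0 ⟨le_rfl, hT⟩).1, (hτmaps T ⟨hT, le_rfl⟩).2]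
    have hD := sum_mul_sub_le hτt hmesh
    have hu := sum_sqrt_mul_sub_le ht hτt
    have hv := sum_sqrt_mul_excess_le hτle hgap (by linarith) ht ht0 htT hmesh
    simp only [Function.comp_apply, htT, ht0, sub_zero] at hD hu
    rw [← Finset.mul_sum, ← Finset.mul_sum]
    calc _ ≤ 3 * (δ * T) + 2 * (3 * T) * (η + δ) := by
          gcongr
          · exact hD.trans (by gcongr)
          · exact hu.trans (Real.sqrt_le_left hT |>.2 (by nlinarith))
      _ = 3 * δ * T + 6 * T * (η + δ) := by ring

end IsBrownianMotion

theorem brownian_cross_quadratic_variation_L2_zero_general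
    {Ω : Type*} [MeasureSpace Ω]
    (W : ℝ → Ω → ℝ) (hW : IsBrownianMotion W)
    (T : ℝ) (hT : 0 < T)
    (τ : ℝ → ℝ) (hτc : ContinuousOn τ (Set.Icc 0 T))
    (hτmono : MonotoneOn τ (Set.Icc 0 T))
    (hτid : ∀ t ∈ Set.Ico (0 : ℝ) T, t < τ t) (hτT : τ T = T)
    (hτmaps : ∀ t ∈ Set.Icc (0 : ℝ) T, τ t ∈ Set.Icc (0 : ℝ) T)
    (s : ℝ) :
    ∀ ε > (0 : ℝ), ∃ δ > (0 : ℝ),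
      ∀ (n : ℕ) (t : Fin (n + 1) → ℝ),
        StrictMono t → t 0 = 0 → t (Fin.last n) = T →
        (∀ i : Fin n, t i.succ - t i.castSucc < δ) →
        (∫ ω, (∑ i : Fin n,
            if t i.castSucc ≤ s then
              (W (t i.succ) ω - W (t i.castSucc) ω) *
                (W (τ (t i.succ)) ω - W (τ (t i.castSucc)) ω)
            else 0) ^ 2 ∂ℙ) < ε := by
  intro ε hε
  have hτle (u : ℝ) (hu : u ∈ Set.Icc 0 T) : u ≤ τ u :=
    hu.2.eq_or_lt.elim (fun h => h ▸ hτT.ge) fun h => (hτid u ⟨hu.1, h⟩).le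
  set η := ε / (16 * T) with hη_def
  have hη : 0 < η := by positivity
  obtain ⟨c, hc, hgap⟩ := (isCompact_Icc (a := 0) (b := T - η)).exists_forall_le' (a := 0)
    ((hτc.mono (Set.Icc_subset_Icc_right (by linarith))).sub continuousOn_id)
    fun u hu => sub_pos.2 (hτid u ⟨hu.1, by linarith [hu.2]⟩)
  refine ⟨min c η, lt_min hc hη, fun n t ht ht0 htT hmesh => ?_⟩
  calc _ ≤ 3 * min c η * T + 6 * T * (η + min c η) :=
        hW.integral_sq_sum_cross_le hτmono hτle hτmaps
          (fun u hu => (min_le_left c η).trans (hgap u hu)) hη.le (lt_min hc hη).le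
          ht.monotone ht0 htT (fun i => (hmesh i).le) s
    _ ≤ 15 * η * T := by nlinarith [min_le_right c η]
    _ < ε := by
        rw [hη_def]
        field_simp
        linarith

/-- The cross quadratic-variation sums of a Brownian motion `W` and its anticipative
time change `W∘τ` vanish in `L²` as the partition mesh tends to `0`: for every
`s ∈ [0,T]`, `E[(Σ_{[u,v]∈P, u≤s} (W(v)−W(u))(W(τ(v))−W(τ(u))))²] → 0` as `|P| → 0`. -/
theorem brownian_cross_quadratic_variation_L2_zero
    {Ω : Type*} [MeasureSpace Ω] [IsProbabilityMeasure (ℙ : Measure Ω)]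
    (W : ℝ → Ω → ℝ) (hW : IsBrownianMotion W)
    (T : ℝ) (hT : 0 < T)
    (τ : ℝ → ℝ) (hτc : ContinuousOn τ (Set.Icc 0 T))
    (hτmono : MonotoneOn τ (Set.Icc 0 T))
    (hτid : ∀ t ∈ Set.Ico (0 : ℝ) T, t < τ t) (hτT : τ T = T)
    (hτmaps : ∀ t ∈ Set.Icc (0 : ℝ) T, τ t ∈ Set.Icc (0 : ℝ) T)
    (s : ℝ) (hs : s ∈ Set.Icc (0 : ℝ) T) :
    ∀ ε > (0 : ℝ), ∃ δ > (0 : ℝ),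
      ∀ (n : ℕ) (t : Fin (n + 1) → ℝ),
        StrictMono t → t 0 = 0 → t (Fin.last n) = T →
        (∀ i : Fin n, t i.succ - t i.castSucc < δ) →
        (∫ ω, (∑ i : Fin n,
            if t i.castSucc ≤ s then
              (W (t i.succ) ω - W (t i.castSucc) ω) *
                (W (τ (t i.succ)) ω - W (τ (t i.castSucc)) ω)
            else 0) ^ 2 ∂ℙ) < ε :=
  brownian_cross_quadratic_variation_L2_zero_general W hW T hT τ hτc hτmono hτid hτT hτmaps s
end

section
/- Let (Ω, F, P) be a probability space, G ⊂ F a sub-σ-algebra, and (X_i)_{i∈I} a family of nonnegative random variables closed under pairwise maximization. Then E[ess sup_i X_i | G] = ess sup_i E[X_i | G] (as elements of L⁰, with conditional expectations of nonnegative random variables possibly taking the value +∞). -/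
open MeasureTheory Filter
open scoped ENNReal

noncomputable def phiE : ℝ≥0∞ → ℝ≥0∞ := fun x => 1 - (1 + x)⁻¹

lemma phiE_le_one (x : ℝ≥0∞) : phiE x ≤ 1 := tsub_le_self

lemma phiE_mono : Monotone phiE := fun a b h =>
  tsub_le_tsub_left (ENNReal.inv_le_inv.mpr (add_le_add (le_refl 1) h)) 1

lemma phiE_strictMono : StrictMono phiE := by
  intro a b hab
  set u := (1 + a)⁻¹
  set v := (1 + b)⁻¹
  have h1 : v < u := ENNReal.inv_lt_inv.mpr (ENNReal.add_lt_add_left ENNReal.one_ne_top hab)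
  have hu1 : u ≤ 1 := by
    rw [ENNReal.inv_le_one]; exact le_self_add
  have hv1 : v ≤ 1 := h1.le.trans hu1
  have hcancel : (1 - u) + u = 1 := tsub_add_cancel_of_le hu1
  have hcancel' : (1 - v) + v = 1 := tsub_add_cancel_of_le hv1
  have key : (1 - u) + v < (1 - v) + v := by
    calc (1 - u) + v < (1 - u) + u :=
          ENNReal.add_lt_add_left (tsub_le_self.trans_lt ENNReal.one_lt_top).ne h1
      _ = 1 := hcancel
      _ = (1 - v) + v := hcancel'.symm
  exact (ENNReal.add_lt_add_iff_right (hv1.trans_lt ENNReal.one_lt_top).ne).mp key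

lemma phiE_iSup (a : ℕ → ℝ≥0∞) : phiE (⨆ n, a n) = ⨆ n, phiE (a n) := by
  unfold phiE
  rw [ENNReal.add_iSup, ENNReal.inv_iSup, ENNReal.sub_iInf]

lemma phiE_meas : Measurable phiE :=
  (measurable_const.sub ((measurable_const.add measurable_id).inv (f := fun x : ℝ≥0∞ => 1 + x)))


/-- `Y` is a version of the conditional expectation of the nonnegative (possibly infinite)
random variable `X` given the sub-σ-algebra `m`. -/
def IsCondExpNN {Ω : Type*} {m0 : MeasurableSpace Ω} (m : MeasurableSpace Ω)
    (μ : @MeasureTheory.Measure Ω m0) (X Y : Ω → ℝ≥0∞) : Prop :=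
  Measurable[m] Y ∧
    ∀ s : Set Ω, MeasurableSet[m] s → ∫⁻ ω in s, Y ω ∂μ = ∫⁻ ω in s, X ω ∂μ

/-- `S` is the essential supremum of the family `X`: it is a measurable a.e. upper bound
and is a.e. dominated by every measurable a.e. upper bound. -/
def IsEssSupFamily {Ω ι : Type*} {m0 : MeasurableSpace Ω} (μ : @MeasureTheory.Measure Ω m0)
    (X : ι → Ω → ℝ≥0∞) (S : Ω → ℝ≥0∞) : Prop :=
  Measurable S ∧ (∀ i, X i ≤ᵐ[μ] S) ∧
    ∀ Z : Ω → ℝ≥0∞, Measurable Z → (∀ i, X i ≤ᵐ[μ] Z) → S ≤ᵐ[μ] Z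

/-- For a family of nonnegative random variables closed under pairwise maximization,
conditional expectation and essential supremum commute:
`E[ess sup_i X_i | G] = ess sup_i E[X_i | G]`. -/
theorem condexp_essSup_comm
    {Ω ι : Type*} (m : MeasurableSpace Ω) {m0 : MeasurableSpace Ω} (μ : Measure Ω) [IsProbabilityMeasure μ]
    (hm : m ≤ m0) [Nonempty ι]
    (X : ι → Ω → ℝ≥0∞) (hmeas : ∀ i, Measurable (X i))
    (hmax : ∀ i j, ∃ k, ∀ᵐ ω ∂μ, X i ω ⊔ X j ω ≤ X k ω)
    (S : Ω → ℝ≥0∞) (hS : IsEssSupFamily μ X S)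
    (Y : ι → Ω → ℝ≥0∞) (hY : ∀ i, IsCondExpNN m μ (X i) (Y i))
    (C : Ω → ℝ≥0∞) (hC : IsCondExpNN m μ S C)
    (S' : Ω → ℝ≥0∞) (hS' : IsEssSupFamily μ Y S') :
    C =ᵐ[μ] S' := by
  classical
  obtain ⟨hC_meas, hC_int⟩ := hC
  obtain ⟨hS'_meas, hS'_ub, hS'_lub⟩ := hS'
  obtain ⟨hS_meas, hS_ub, hS_lub⟩ := hS
  have hmeas0 : ∀ i, Measurable[m0] (X i) := fun i => hmeas i
  -- monotonicity of conditional expectation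
  have key_mono : ∀ (U V W Z : Ω → ℝ≥0∞), Measurable[m] W → Measurable[m] Z →
      (∀ s, MeasurableSet[m] s → ∫⁻ ω in s, W ω ∂μ = ∫⁻ ω in s, U ω ∂μ) →
      (∀ s, MeasurableSet[m] s → ∫⁻ ω in s, Z ω ∂μ = ∫⁻ ω in s, V ω ∂μ) →
      U ≤ᵐ[μ] V → W ≤ᵐ[μ] Z := by
    intro U V W Z hW hZ hWU hZV hUV
    refine ae_le_of_ae_le_trim (hm := hm) ?_
    refine ae_le_of_forall_setLIntegral_le_of_sigmaFinite (μ := μ.trim hm) hW ?_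
    intro s hs _
    rw [restrict_trim hm μ hs, lintegral_trim hm hW, lintegral_trim hm hZ,
      hWU s hs, hZV s hs]
    exact lintegral_mono_ae (ae_restrict_of_ae hUV)
  -- Step 1: S' ≤ᵐ C
  have hYC : ∀ i, Y i ≤ᵐ[μ] C := fun i =>
    key_mono (X i) S (Y i) C (hY i).1 hC_meas (hY i).2 hC_int (hS_ub i)
  have hS'C : S' ≤ᵐ[μ] C := hS'_lub C (hC_meas.mono hm le_rfl) hYC
  -- Step 2: maximizing sequence
  set f : ι → ℝ≥0∞ := fun i => ∫⁻ ω, phiE (X i ω) ∂μ with hf_def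
  set α : ℝ≥0∞ := ⨆ i, f i with hα_def
  have hf_le_one : ∀ i, f i ≤ 1 := by
    intro i
    calc f i ≤ ∫⁻ _, 1 ∂μ := lintegral_mono fun ω => phiE_le_one _
      _ = 1 := by simp
  have hα_le : α ≤ 1 := iSup_le hf_le_one
  have hα_ne_top : α ≠ ∞ := (hα_le.trans_lt ENNReal.one_lt_top).ne
  have hi : ∀ n : ℕ, ∃ i, α - ((n : ℝ≥0∞) + 1)⁻¹ ≤ f i := by
    intro n
    rcases eq_or_ne α 0 with h | h
    · obtain ⟨i⟩ := (inferInstance : Nonempty ι)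
      exact ⟨i, by simp [h]⟩
    · have hlt : α - ((n : ℝ≥0∞) + 1)⁻¹ < α :=
        ENNReal.sub_lt_self hα_ne_top h
          (ENNReal.inv_ne_zero.mpr (by simp [ENNReal.add_eq_top]))
      rw [hα_def] at hlt
      obtain ⟨i, hi⟩ := lt_iSup_iff.mp hlt
      exact ⟨i, hi.le⟩
  choose i0 hi0 using hi
  choose k hk using hmax
  let j : ℕ → ι := fun n => Nat.rec (i0 0) (fun n jn => k jn (i0 (n + 1))) n
  have hae : ∀ᵐ ω ∂μ, ∀ n, X (j n) ω ⊔ X (i0 (n + 1)) ω ≤ X (j (n + 1)) ω :=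
    ae_all_iff.mpr fun n => hk (j n) (i0 (n + 1))
  have hmono_ae : ∀ᵐ ω ∂μ, Monotone fun n => X (j n) ω := by
    filter_upwards [hae] with ω h
    exact monotone_nat_of_le_succ fun n => le_trans le_sup_left (h n)
  have hi0_le : ∀ᵐ ω ∂μ, ∀ n, X (i0 n) ω ≤ X (j n) ω := by
    filter_upwards [hae] with ω h
    intro n
    cases n with
    | zero => exact le_rfl
    | succ n => exact le_trans le_sup_right (h n)
  set T : Ω → ℝ≥0∞ := fun ω => ⨆ n, X (j n) ω with hT_def
  have hT_meas : Measurable[m0] T := Measurable.iSup fun n => hmeas0 _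
  have hfjT : ∀ n, f (j n) ≤ ∫⁻ ω, phiE (T ω) ∂μ := fun n =>
    lintegral_mono fun ω => phiE_mono (le_iSup (fun n => X (j n) ω) n)
  have hfij : ∀ n, f (i0 n) ≤ f (j n) := by
    intro n
    refine lintegral_mono_ae ?_
    filter_upwards [hi0_le] with ω h
    exact phiE_mono (h n)
  have hαT : α ≤ ∫⁻ ω, phiE (T ω) ∂μ := by
    have hc_fin : ∫⁻ ω, phiE (T ω) ∂μ < ∞ := by
      refine lt_of_le_of_lt ?_ ENNReal.one_lt_top
      calc ∫⁻ ω, phiE (T ω) ∂μ ≤ ∫⁻ _, 1 ∂μ := lintegral_mono fun ω => phiE_le_one _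
        _ = 1 := by simp
    refine ENNReal.le_of_forall_pos_le_add fun ε hε _ => ?_
    obtain ⟨n, hn⟩ := ENNReal.exists_inv_nat_lt
      (show (ε : ℝ≥0∞) ≠ 0 by exact_mod_cast hε.ne')
    have h1 : ((n : ℝ≥0∞) + 1)⁻¹ ≤ (n : ℝ≥0∞)⁻¹ :=
      ENNReal.inv_le_inv.mpr le_self_add
    calc α ≤ f (i0 n) + ((n : ℝ≥0∞) + 1)⁻¹ := tsub_le_iff_right.mp (hi0 n)
      _ ≤ (∫⁻ ω, phiE (T ω) ∂μ) + ε :=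
        add_le_add ((hfij n).trans (hfjT n)) (h1.trans hn.le)
  have hTα : ∫⁻ ω, phiE (T ω) ∂μ = α := by
    refine le_antisymm ?_ hαT
    have hswap : ∫⁻ ω, ⨆ n, phiE (X (j n) ω) ∂μ
        = ⨆ n, ∫⁻ ω, phiE (X (j n) ω) ∂μ := by
      refine lintegral_iSup' (fun n => (phiE_meas.comp (hmeas0 _)).aemeasurable) ?_
      filter_upwards [hmono_ae] with ω h
      exact fun a b hab => phiE_mono (h hab)
    have heq : ∫⁻ ω, phiE (T ω) ∂μ = ∫⁻ ω, ⨆ n, phiE (X (j n) ω) ∂μ :=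
      lintegral_congr fun ω => phiE_iSup _
    rw [heq, hswap]
    exact iSup_le fun n => le_iSup f (j n)
  -- T is an a.e. upper bound for every X i
  have hT_ub : ∀ i', X i' ≤ᵐ[μ] T := by
    intro i'
    have hGF : ∀ ω, phiE (T ω) ≤ phiE (X i' ω ⊔ T ω) := fun ω => phiE_mono le_sup_right
    have hF_le : ∫⁻ ω, phiE (X i' ω ⊔ T ω) ∂μ ≤ α := by
      have hpt : ∀ ω, phiE (X i' ω ⊔ T ω) = ⨆ n, phiE (X i' ω ⊔ X (j n) ω) := by
        intro ω
        have h1 : X i' ω ⊔ T ω = ⨆ n, (X i' ω ⊔ X (j n) ω) := by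
          refine le_antisymm ?_
            (iSup_le fun n => sup_le_sup le_rfl (le_iSup (fun n => X (j n) ω) n))
          refine sup_le (le_iSup_of_le 0 le_sup_left) ?_
          exact iSup_mono fun n => le_sup_right
        rw [h1, phiE_iSup]
      have hswap : ∫⁻ ω, ⨆ n, phiE (X i' ω ⊔ X (j n) ω) ∂μ
          = ⨆ n, ∫⁻ ω, phiE (X i' ω ⊔ X (j n) ω) ∂μ := by
        refine lintegral_iSup'
          (fun n => (phiE_meas.comp ((hmeas0 i').sup (hmeas0 _))).aemeasurable) ?_
        filter_upwards [hmono_ae] with ω h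
        exact fun a b hab => phiE_mono (sup_le_sup le_rfl (h hab))
      calc ∫⁻ ω, phiE (X i' ω ⊔ T ω) ∂μ
          = ⨆ n, ∫⁻ ω, phiE (X i' ω ⊔ X (j n) ω) ∂μ := by
            rw [← hswap]; exact lintegral_congr hpt
        _ ≤ α := by
            refine iSup_le fun n => ?_
            refine le_trans (lintegral_mono_ae ?_) (le_iSup f (k i' (j n)))
            filter_upwards [hk i' (j n)] with ω h using phiE_mono h
    have hG_fin : ∫⁻ ω, phiE (T ω) ∂μ ≠ ∞ := by rw [hTα]; exact hα_ne_top
    have hGmeas : Measurable[m0] fun ω => phiE (T ω) := phiE_meas.comp hT_meas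
    have hsub : ∫⁻ ω, (phiE (X i' ω ⊔ T ω) - phiE (T ω)) ∂μ = 0 := by
      rw [@lintegral_sub _ m0 μ _ _ hGmeas hG_fin (ae_of_all _ hGF), hTα]
      exact tsub_eq_zero_of_le hF_le
    have hFGmeas : Measurable[m0] fun ω => phiE (X i' ω ⊔ T ω) - phiE (T ω) :=
      (phiE_meas.comp ((hmeas0 i').sup hT_meas)).sub (phiE_meas.comp hT_meas)
    filter_upwards [(lintegral_eq_zero_iff hFGmeas).mp hsub] with ω h
    have h0 : phiE (X i' ω ⊔ T ω) - phiE (T ω) = 0 := h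
    have heq : X i' ω ⊔ T ω = T ω :=
      phiE_strictMono.injective (le_antisymm (tsub_eq_zero_iff_le.mp h0) (hGF ω))
    exact le_sup_left.trans heq.le
  have hST : S =ᵐ[μ] T := by
    have h1 : S ≤ᵐ[μ] T := hS_lub T hT_meas hT_ub
    have h2 : T ≤ᵐ[μ] S := by
      filter_upwards [ae_all_iff.mpr fun n => hS_ub (j n)] with ω h
      exact iSup_le h
    exact h1.antisymm h2
  -- D := ⨆ n, Y (j n)
  set D : Ω → ℝ≥0∞ := fun ω => ⨆ n, Y (j n) ω with hD_def
  have hD_meas : Measurable[m] D := Measurable.iSup fun n => (hY _).1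
  have hYmono : ∀ᵐ ω ∂μ, Monotone fun n => Y (j n) ω := by
    have hstep : ∀ n, Y (j n) ≤ᵐ[μ] Y (j (n + 1)) := by
      intro n
      refine key_mono (X (j n)) (X (j (n + 1))) _ _ (hY _).1 (hY _).1
        (hY _).2 (hY _).2 ?_
      filter_upwards [hae] with ω h using le_trans le_sup_left (h n)
    filter_upwards [ae_all_iff.mpr hstep] with ω h
    exact monotone_nat_of_le_succ h
  have hD_int : ∀ s, MeasurableSet[m] s →
      ∫⁻ ω in s, D ω ∂μ = ∫⁻ ω in s, S ω ∂μ := by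
    intro s hs
    have h1 : ∫⁻ ω in s, ⨆ n, Y (j n) ω ∂μ = ⨆ n, ∫⁻ ω in s, Y (j n) ω ∂μ :=
      lintegral_iSup' (fun n => (((hY _).1).mono hm le_rfl).aemeasurable.restrict)
        (ae_restrict_of_ae hYmono)
    have h2 : ∫⁻ ω in s, ⨆ n, X (j n) ω ∂μ = ⨆ n, ∫⁻ ω in s, X (j n) ω ∂μ :=
      lintegral_iSup' (fun n => (hmeas0 _).aemeasurable.restrict)
        (ae_restrict_of_ae hmono_ae)
    have h3 : ∀ n, ∫⁻ ω in s, Y (j n) ω ∂μ = ∫⁻ ω in s, X (j n) ω ∂μ :=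
      fun n => (hY (j n)).2 s hs
    have h4 : ∫⁻ ω in s, T ω ∂μ = ∫⁻ ω in s, S ω ∂μ :=
      lintegral_congr_ae (ae_restrict_of_ae hST.symm)
    calc ∫⁻ ω in s, D ω ∂μ = ⨆ n, ∫⁻ ω in s, Y (j n) ω ∂μ := h1
      _ = ⨆ n, ∫⁻ ω in s, X (j n) ω ∂μ := by simp_rw [h3]
      _ = ∫⁻ ω in s, T ω ∂μ := h2.symm
      _ = ∫⁻ ω in s, S ω ∂μ := h4
  have hCD : C =ᵐ[μ] D := by
    have hrefl : S ≤ᵐ[μ] S := ae_of_all _ fun _ => le_rfl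
    exact (key_mono S S C D hC_meas hD_meas hC_int hD_int hrefl).antisymm
      (key_mono S S D C hD_meas hC_meas hD_int hC_int hrefl)
  have hDS' : D ≤ᵐ[μ] S' := by
    filter_upwards [ae_all_iff.mpr fun n => hS'_ub (j n)] with ω h
    exact iSup_le h
  filter_upwards [hCD, hDS', hS'C] with ω h1 h2 h3
  exact le_antisymm (h1 ▸ h2) h3
end

section
/- Let X, Y: [0,T] → ℝ be continuous paths and (P_n) an increasing sequence of partitions with mesh tending to 0. Suppose X has quadratic variation [X] (a continuous nondecreasing function) along (P_n), Y has quadratic variation [Y] along (P_n), and the cross sums Σ_{[u,v]∈P_n, u≤t}(X(v)−X(u))(Y(v)−Y(u)) → 0 for each t in a dense subset of [0,T]. If additionally the cross sums are uniformly bounded in total variation (as distribution functions of signed measures), then for every continuous h: [0,T] → ℝ, Σ_{[u,v]∈P_n} h(u)(X(v)−X(u))(Y(v)−Y(u)) → 0. -/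
open scoped BigOperators
open Filter


lemma step_approx {N : ℕ} (q r : ℕ → ℝ) (φ : ℝ → ℝ) (v ε : ℝ)
    (hqm : ∀ j < N, q j ≤ q (j + 1))
    (hq0 : q 0 < v) (hqN : v ≤ q N)
    (hstep : ∀ j < N, q j < v → v ≤ q (j + 1) → |φ v - φ (r j)| ≤ ε) :
    |φ v - ∑ j ∈ Finset.range N, φ (r j) *
      ((if v ≤ q (j + 1) then (1:ℝ) else 0) - (if v ≤ q j then (1:ℝ) else 0))| ≤ ε := by
  set c : ℕ → ℝ := fun j => if v ≤ q j then (1:ℝ) else 0 with hc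
  have hcmono : ∀ j < N, c j ≤ c (j + 1) := by
    intro j hj
    simp only [hc]
    split_ifs with h1 h2
    · exact le_refl 1
    · exact absurd (h1.trans (hqm j hj)) h2
    · norm_num
    · exact le_refl 0
  have hsum : ∑ j ∈ Finset.range N, (c (j + 1) - c j) = 1 := by
    rw [Finset.sum_range_sub c N]; simp only [hc]
    rw [if_pos hqN, if_neg (not_le.mpr hq0)]; ring
  have key : φ v - ∑ j ∈ Finset.range N, φ (r j) * (c (j + 1) - c j)
      = ∑ j ∈ Finset.range N, (φ v - φ (r j)) * (c (j + 1) - c j) := by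
    simp only [sub_mul, Finset.sum_sub_distrib, ← Finset.mul_sum, hsum, mul_one]
  rw [key]
  calc |∑ j ∈ Finset.range N, (φ v - φ (r j)) * (c (j + 1) - c j)|
      ≤ ∑ j ∈ Finset.range N, |(φ v - φ (r j)) * (c (j + 1) - c j)| :=
        Finset.abs_sum_le_sum_abs _ _
    _ ≤ ∑ j ∈ Finset.range N, ε * (c (j + 1) - c j) := by
        apply Finset.sum_le_sum
        intro j hj
        have hj' := Finset.mem_range.mp hj
        have hd : 0 ≤ c (j + 1) - c j := sub_nonneg.mpr (hcmono j hj')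
        rw [abs_mul, abs_of_nonneg hd]
        rcases eq_or_lt_of_le hd with he | hl
        · rw [← he]; simp
        · have h1 : ¬ v ≤ q j := by
            intro hv
            simp only [hc, if_pos hv, if_pos (hv.trans (hqm j hj'))] at hl
            linarith
          have h2 : v ≤ q (j + 1) := by
            by_contra hv
            simp only [hc, if_neg h1, if_neg hv] at hl
            linarith
          exact mul_le_mul_of_nonneg_right (hstep j hj' (not_le.mp h1) h2) hd
    _ = ε := by rw [← Finset.mul_sum, hsum, mul_one]

lemma ite_cauchy_schwarz {n : ℕ} (P : Fin n → Prop) [DecidablePred P] (a b : Fin n → ℝ) :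
    |∑ i, (if P i then 0 else a i * b i)| ≤
      Real.sqrt (∑ i, (if P i then 0 else (a i) ^ 2)) *
        Real.sqrt (∑ i, (if P i then 0 else (b i) ^ 2)) := by
  have h1 : |∑ i, (if P i then 0 else a i * b i)|
      ≤ ∑ i, (if P i then (0:ℝ) else |a i|) * (if P i then (0:ℝ) else |b i|) := by
    refine (Finset.abs_sum_le_sum_abs _ _).trans (Finset.sum_le_sum fun i _ => ?_)
    by_cases h : P i <;> simp [h, abs_mul]
  refine h1.trans ?_
  have h2 := Finset.sum_mul_sq_le_sq_mul_sq Finset.univ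
    (fun i => if P i then (0:ℝ) else |a i|) (fun i => if P i then (0:ℝ) else |b i|)
  have h3 : (∑ i, (if P i then (0:ℝ) else |a i|) ^ 2) = ∑ i, (if P i then 0 else (a i) ^ 2) := by
    refine Finset.sum_congr rfl fun i _ => ?_
    by_cases h : P i <;> simp [h, sq_abs]
  have h4 : (∑ i, (if P i then (0:ℝ) else |b i|) ^ 2) = ∑ i, (if P i then 0 else (b i) ^ 2) := by
    refine Finset.sum_congr rfl fun i _ => ?_
    by_cases h : P i <;> simp [h, sq_abs]
  rw [h3, h4] at h2
  have hnn : 0 ≤ ∑ i, (if P i then (0:ℝ) else |a i|) * (if P i then (0:ℝ) else |b i|) :=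
    Finset.sum_nonneg fun i _ => by positivity
  calc ∑ i, (if P i then (0:ℝ) else |a i|) * (if P i then (0:ℝ) else |b i|)
      = Real.sqrt ((∑ i, (if P i then (0:ℝ) else |a i|) * (if P i then (0:ℝ) else |b i|)) ^ 2) :=
        (Real.sqrt_sq hnn).symm
    _ ≤ Real.sqrt ((∑ i, (if P i then (0:ℝ) else (a i) ^ 2)) * ∑ i, (if P i then 0 else (b i) ^ 2)) :=
        Real.sqrt_le_sqrt h2
    _ = _ := Real.sqrt_mul (Finset.sum_nonneg fun i _ => by positivity) _

set_option maxHeartbeats 4000000 in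
/-- If `X` and `Y` have quadratic variations along an increasing sequence of partitions
with vanishing mesh, the cross sums tend to `0` on a dense set of times and are uniformly
bounded in total variation, then the weighted cross sums against any continuous `h`
tend to `0`. -/
theorem cross_quadratic_variation_weighted_sums
    (T : ℝ) (hT : 0 < T)
    (X Y : ℝ → ℝ) (hX : ContinuousOn X (Set.Icc 0 T)) (hY : ContinuousOn Y (Set.Icc 0 T))
    (m : ℕ → ℕ) (t : ∀ k, Fin (m k + 1) → ℝ)
    (hmono : ∀ k, StrictMono (t k))
    (h0 : ∀ k, t k 0 = 0) (hlast : ∀ k, t k (Fin.last (m k)) = T)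
    (hnested : ∀ k, Set.range (t k) ⊆ Set.range (t (k + 1)))
    (δ : ℕ → ℝ) (hδ : Tendsto δ atTop (nhds 0))
    (hmesh : ∀ k (i : Fin (m k)), t k i.succ - t k i.castSucc ≤ δ k)
    -- `X` has quadratic variation `QX` (continuous, nondecreasing) along the partitions
    (QX : ℝ → ℝ) (hQXc : ContinuousOn QX (Set.Icc 0 T)) (hQXm : MonotoneOn QX (Set.Icc 0 T))
    (hQX : ∀ s ∈ Set.Icc (0 : ℝ) T,
      Tendsto (fun k => ∑ i : Fin (m k),
          (if t k i.castSucc ≤ s then (X (t k i.succ) - X (t k i.castSucc)) ^ 2 else 0))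
        atTop (nhds (QX s)))
    -- `Y` has quadratic variation `QY` (continuous, nondecreasing) along the partitions
    (QY : ℝ → ℝ) (hQYc : ContinuousOn QY (Set.Icc 0 T)) (hQYm : MonotoneOn QY (Set.Icc 0 T))
    (hQY : ∀ s ∈ Set.Icc (0 : ℝ) T,
      Tendsto (fun k => ∑ i : Fin (m k),
          (if t k i.castSucc ≤ s then (Y (t k i.succ) - Y (t k i.castSucc)) ^ 2 else 0))
        atTop (nhds (QY s)))
    -- the cross sums tend to `0` on a dense set of times
    (D : Set ℝ) (hD : D ⊆ Set.Icc 0 T) (hDdense : Set.Icc (0 : ℝ) T ⊆ closure D)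
    (hcross : ∀ s ∈ D,
      Tendsto (fun k => ∑ i : Fin (m k),
          (if t k i.castSucc ≤ s then
            (X (t k i.succ) - X (t k i.castSucc)) * (Y (t k i.succ) - Y (t k i.castSucc))
          else 0))
        atTop (nhds 0))
    -- uniform bound in total variation
    (C : ℝ) (hC : ∀ k, ∑ i : Fin (m k),
      |X (t k i.succ) - X (t k i.castSucc)| * |Y (t k i.succ) - Y (t k i.castSucc)| ≤ C) :
    ∀ h : ℝ → ℝ, ContinuousOn h (Set.Icc 0 T) →
      Tendsto (fun k => ∑ i : Fin (m k),
          h (t k i.castSucc) *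
            (X (t k i.succ) - X (t k i.castSucc)) * (Y (t k i.succ) - Y (t k i.castSucc)))
        atTop (nhds 0) := by
  intro h hh
  have hTT : T ∈ Set.Icc (0:ℝ) T := ⟨hT.le, le_refl T⟩
  have htlow : ∀ k (i : Fin (m k)), (0:ℝ) ≤ t k i.castSucc := by
    intro k i
    rw [← h0 k]
    exact (hmono k).monotone (Fin.zero_le _)
  have hthigh : ∀ k (i : Fin (m k)), t k i.castSucc ≤ T := by
    intro k i
    rw [← hlast k]
    exact (hmono k).monotone (Fin.le_last _)
  have htmem : ∀ k (i : Fin (m k)), t k i.castSucc ∈ Set.Icc (0:ℝ) T :=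
    fun k i => ⟨htlow k i, hthigh k i⟩
  obtain ⟨M0, hM0⟩ := isCompact_Icc.exists_bound_of_continuousOn hh
  set Mh := max M0 0 with hMhdef
  have hMhnn : (0:ℝ) ≤ Mh := le_max_right _ _
  have hMhb : ∀ u ∈ Set.Icc (0:ℝ) T, |h u| ≤ Mh := by
    intro u hu
    calc |h u| = ‖h u‖ := (Real.norm_eq_abs _).symm
      _ ≤ M0 := hM0 u hu
      _ ≤ Mh := le_max_left _ _
  have hC0 : (0:ℝ) ≤ C :=
    le_trans (Finset.sum_nonneg fun i _ => mul_nonneg (abs_nonneg _) (abs_nonneg _)) (hC 0)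
  set K := C + 1 + Mh with hKdef
  have hKpos : (0:ℝ) < K := by simp only [hKdef]; linarith
  rw [NormedAddCommGroup.tendsto_nhds_zero]
  intro ε₀ hε₀
  set ε := min 1 (ε₀ / (2 * K)) with hεdef
  have hεpos : (0:ℝ) < ε := lt_min one_pos (by positivity)
  have hε1 : ε ≤ 1 := min_le_left _ _
  -- uniform continuity of h
  obtain ⟨δ', hδ'pos, hδ'⟩ := Metric.uniformContinuousOn_iff.mp
    (isCompact_Icc.uniformContinuousOn_of_continuous hh) ε hεpos
  -- continuity of QX, QY at T within Icc
  obtain ⟨rX, hrXpos, hrX⟩ := Metric.continuousWithinAt_iff.mp (hQXc T hTT) (ε^2) (by positivity)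
  obtain ⟨rY, hrYpos, hrY⟩ := Metric.continuousWithinAt_iff.mp (hQYc T hTT) (ε^2) (by positivity)
  set ρ := min (min rX rY) (min δ' T) / 2 with hρdef
  have hρpos : (0:ℝ) < ρ := by
    have := lt_min (lt_min hrXpos hrYpos) (lt_min hδ'pos hT)
    simp only [hρdef]; linarith
  have hρrX : ρ < rX := by
    have h1 : min (min rX rY) (min δ' T) ≤ rX := (min_le_left _ _).trans (min_le_left _ _)
    simp only [hρdef]; linarith
  have hρrY : ρ < rY := by
    have h1 : min (min rX rY) (min δ' T) ≤ rY := (min_le_left _ _).trans (min_le_right _ _)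
    simp only [hρdef]; linarith
  have hρδ' : ρ < δ' := by
    have h1 : min (min rX rY) (min δ' T) ≤ δ' := (min_le_right _ _).trans (min_le_left _ _)
    simp only [hρdef]; linarith
  have hρT : ρ ≤ T / 2 := by
    have h1 : min (min rX rY) (min δ' T) ≤ T := (min_le_right _ _).trans (min_le_right _ _)
    simp only [hρdef]; linarith
  -- choose the anchor point p ∈ D near T
  obtain ⟨p, hpD, hpdist⟩ := Metric.mem_closure_iff.mp (hDdense hTT) ρ hρpos
  have hpIcc : p ∈ Set.Icc (0:ℝ) T := hD hpD
  have hTp : T - p < ρ := by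
    rw [Real.dist_eq, abs_of_nonneg (by linarith [hpIcc.2])] at hpdist
    exact hpdist
  have hppos : (0:ℝ) < p := by linarith
  -- the grid
  set η := δ' / 3 with hηdef
  have hηpos : (0:ℝ) < η := by simp only [hηdef]; linarith
  set J := Nat.floor (p / η - 1/2) with hJdef
  have hJup : p < J * η + 3 * η / 2 := by
    have h1 : p / η - 1/2 < (J:ℝ) + 1 := Nat.lt_floor_add_one _
    have h2 : p / η < (J:ℝ) + 3/2 := by linarith
    have h3 : p = (p / η) * η := by field_simp
    rw [h3]
    calc (p / η) * η < ((J:ℝ) + 3/2) * η := by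
          exact mul_lt_mul_of_pos_right h2 hηpos
      _ = J * η + 3 * η / 2 := by ring
  have hJdown : ∀ j : ℕ, 1 ≤ j → j ≤ J → (j:ℝ) * η + η / 2 ≤ p := by
    intro j h1 h2
    have hJ1 : 1 ≤ J := le_trans h1 h2
    have harg : (0:ℝ) ≤ p / η - 1/2 := by
      by_contra hcon
      push_neg at hcon
      have : J = 0 := by
        simp only [hJdef]; exact Nat.floor_of_nonpos hcon.le
      omega
    have h3 : (J:ℝ) ≤ p / η - 1/2 := Nat.floor_le harg
    have h4 : (j:ℝ) ≤ (J:ℝ) := Nat.cast_le.mpr h2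
    have h5 : ((J:ℝ) + 1/2) * η ≤ (p/η) * η := by
      apply mul_le_mul_of_nonneg_right _ hηpos.le
      linarith
    have h6 : (p / η) * η = p := by field_simp
    nlinarith [hηpos]
  -- choose grid points in D near multiples of η
  have hPex : ∀ j : ℕ, ∃ d : ℝ, 1 ≤ j → j ≤ J → d ∈ D ∧ |d - (j:ℝ) * η| < η / 4 := by
    intro j
    by_cases hj : 1 ≤ j ∧ j ≤ J
    · have h1 : (j:ℝ) * η + η / 2 ≤ p := hJdown j hj.1 hj.2
      have h2 : (j:ℝ) * η ∈ Set.Icc (0:ℝ) T := ⟨by positivity, by linarith [hpIcc.2]⟩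
      obtain ⟨d, hdD, hdd⟩ := Metric.mem_closure_iff.mp (hDdense h2) (η / 4) (by positivity)
      refine ⟨d, fun _ _ => ⟨hdD, ?_⟩⟩
      rw [Real.dist_eq] at hdd
      rw [abs_sub_comm]
      exact hdd
    · exact ⟨0, fun ha hb => absurd ⟨ha, hb⟩ hj⟩
  choose P hP using hPex
  have hPmem : ∀ j : ℕ, 1 ≤ j → j ≤ J → P j ∈ D := fun j a b => (hP j a b).1
  have hPIcc : ∀ j : ℕ, 1 ≤ j → j ≤ J → P j ∈ Set.Icc (0:ℝ) T := fun j a b => hD (hPmem j a b)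
  have hPlb : ∀ j : ℕ, 1 ≤ j → j ≤ J → (j:ℝ) * η - η / 4 < P j := by
    intro j a b
    have := (abs_lt.mp (hP j a b).2).1
    linarith
  have hPub : ∀ j : ℕ, 1 ≤ j → j ≤ J → P j < (j:ℝ) * η + η / 4 := by
    intro j a b
    have := (abs_lt.mp (hP j a b).2).2
    linarith
  -- the full cut sequence
  set N := J + 2 with hNdef
  set q : ℕ → ℝ := fun j =>
    if j = 0 then (-1) else if j ≤ J then P j else if j = J + 1 then p else T with hqdef
  set r : ℕ → ℝ := fun j => if j = 0 then 0 else if j ≤ J then P j else p with hrdef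
  have hq0 : q 0 = -1 := by simp [hqdef]
  have hqmid : ∀ j : ℕ, 1 ≤ j → j ≤ J → q j = P j := by
    intro j a b
    simp only [hqdef]
    rw [if_neg (by omega), if_pos b]
  have hqJ1 : q (J + 1) = p := by
    simp only [hqdef]
    rw [if_neg (by omega), if_neg (by omega)]; simp
  have hqN : q N = T := by
    simp only [hqdef, hNdef]
    rw [if_neg (by omega), if_neg (by omega), if_neg (by omega)]
  have hr0 : r 0 = 0 := by simp [hrdef]
  have hrmid : ∀ j : ℕ, 1 ≤ j → j ≤ J → r j = P j := by
    intro j a b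
    simp only [hrdef]
    rw [if_neg (by omega), if_pos b]
  have hrJ1 : r (J + 1) = p := by
    simp only [hrdef]
    rw [if_neg (by omega), if_neg (by omega)]
  -- q 1 is small
  have hq1small : q 1 < 3 * η / 2 := by
    rcases Nat.eq_zero_or_pos J with hJ0 | hJ1
    · have : q 1 = p := by rw [← hqJ1, hJ0]
      rw [this]
      have : (J:ℝ) = 0 := by rw [hJ0]; norm_num
      nlinarith [hJup]
    · rw [hqmid 1 le_rfl hJ1]
      have := hPub 1 le_rfl hJ1
      push_cast at this
      linarith
  have hq1pos : 0 < q 1 := by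
    rcases Nat.eq_zero_or_pos J with hJ0 | hJ1
    · have : q 1 = p := by rw [← hqJ1, hJ0]
      rw [this]; exact hppos
    · rw [hqmid 1 le_rfl hJ1]
      have := hPlb 1 le_rfl hJ1
      push_cast at this
      linarith
  -- monotonicity of q
  have hqmono : ∀ j, j < N → q j ≤ q (j + 1) := by
    intro j hj
    rcases Nat.eq_zero_or_pos j with rfl | hj0
    · rw [hq0]; linarith [hq1pos]
    · rcases Nat.lt_or_ge j J with hjJ | hjJ
      · -- 1 ≤ j < J
        rw [hqmid j hj0 hjJ.le, hqmid (j+1) (by omega) hjJ]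
        have h1 := hPub j hj0 hjJ.le
        have h2 := hPlb (j+1) (by omega) hjJ
        push_cast at h2
        linarith
      · rcases Nat.eq_or_lt_of_le hjJ with hjJ' | hjJ'
        · -- j = J ≥ 1
          have hjeq : j = J := hjJ'.symm
          rw [hjeq, hqmid J (by omega) le_rfl, hqJ1]
          have h1 := hPub J (by omega) le_rfl
          have h2 := hJdown J (by omega) le_rfl
          linarith
        · -- j ≥ J + 1; since j < N = J + 2, j = J + 1
          have hjeq : j = J + 1 := by omega
          rw [hjeq, hqJ1, show J + 1 + 1 = N from rfl, hqN]
          exact hpIcc.2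
  have hη3 : 3 * η = δ' := by simp only [hηdef]; ring
  -- the step estimate
  have hstep : ∀ j, j < N → ∀ u ∈ Set.Icc (0:ℝ) T, q j < u → u ≤ q (j + 1) →
      |h u - h (r j)| ≤ ε := by
    intro j hj u hu hqu huq
    have key : r j ∈ Set.Icc (0:ℝ) T ∧ |u - r j| < δ' := by
      rcases Nat.eq_zero_or_pos j with rfl | hj0
      · rw [hr0]
        refine ⟨⟨le_refl 0, hT.le⟩, ?_⟩
        rw [sub_zero, abs_of_nonneg hu.1]
        have h1 : u ≤ q 1 := huq
        linarith [hq1small, hδ'pos]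
      · rcases Nat.lt_or_ge j J with hjJ | hjJ
        · -- 1 ≤ j < J
          rw [hrmid j hj0 hjJ.le]
          refine ⟨hPIcc j hj0 hjJ.le, ?_⟩
          rw [hqmid j hj0 hjJ.le] at hqu
          rw [hqmid (j+1) (by omega) hjJ] at huq
          rw [abs_of_pos (by linarith)]
          have h1 := hPlb j hj0 hjJ.le
          have h2 := hPub (j+1) (by omega) hjJ
          push_cast at h2
          linarith
        · rcases Nat.eq_or_lt_of_le hjJ with hjJ' | hjJ'
          · -- j = J ≥ 1
            have hjeq : j = J := hjJ'.symm
            rw [hjeq, hrmid J (by omega) le_rfl]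
            rw [hjeq, hqmid J (by omega) le_rfl] at hqu
            rw [hjeq, hqJ1] at huq
            refine ⟨hPIcc J (by omega) le_rfl, ?_⟩
            rw [abs_of_pos (by linarith)]
            have h1 := hPlb J (by omega) le_rfl
            linarith [hJup]
          · -- j = J + 1
            have hjeq : j = J + 1 := by omega
            rw [hjeq, hrJ1]
            rw [hjeq, hqJ1] at hqu
            rw [hjeq, show J + 1 + 1 = N from rfl, hqN] at huq
            refine ⟨hpIcc, ?_⟩
            rw [abs_of_pos (by linarith)]
            linarith
    have := hδ' u hu (r j) key.1 (by rw [Real.dist_eq]; exact key.2)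
    rw [Real.dist_eq] at this
    exact this.le
  -- the cross-sum distribution functions
  set F : ℕ → ℝ → ℝ := fun k s => ∑ i : Fin (m k),
    (if t k i.castSucc ≤ s then
      (X (t k i.succ) - X (t k i.castSucc)) * (Y (t k i.succ) - Y (t k i.castSucc))
    else 0) with hFdef
  have hF0 : ∀ j, j ≤ J + 1 → Tendsto (fun k => F k (q j)) atTop (nhds 0) := by
    intro j hj
    rcases Nat.eq_zero_or_pos j with rfl | hj0
    · rw [hq0]
      have : ∀ k, F k (-1) = 0 := by
        intro k
        simp only [hFdef]
        refine Finset.sum_eq_zero fun i _ => ?_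
        rw [if_neg (by linarith [htlow k i])]
      simpa [this] using tendsto_const_nhds
    · rcases Nat.lt_or_ge j (J + 1) with hjJ | hjJ
      · rw [hqmid j hj0 (by omega)]
        exact hcross (P j) (hPmem j hj0 (by omega))
      · have hjeq : j = J + 1 := by omega
        rw [hjeq, hqJ1]
        exact hcross p hpD
  have hFone : ∀ k s, F k s = ∑ i : Fin (m k),
      (if t k i.castSucc ≤ s then (1:ℝ) else 0) *
        ((X (t k i.succ) - X (t k i.castSucc)) * (Y (t k i.succ) - Y (t k i.castSucc))) := by
    intro k s
    simp only [hFdef]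
    refine Finset.sum_congr rfl fun i _ => ?_
    split_ifs <;> simp
  -- the decomposition of the weighted sum
  have hdecomp : ∀ k,
      (∑ i : Fin (m k), h (t k i.castSucc) *
        (X (t k i.succ) - X (t k i.castSucc)) * (Y (t k i.succ) - Y (t k i.castSucc)))
      - ∑ j ∈ Finset.range N, h (r j) * (F k (q (j + 1)) - F k (q j))
      = ∑ i : Fin (m k),
          (h (t k i.castSucc) - ∑ j ∈ Finset.range N, h (r j) *
            ((if t k i.castSucc ≤ q (j + 1) then (1:ℝ) else 0)
              - (if t k i.castSucc ≤ q j then (1:ℝ) else 0)))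
          * ((X (t k i.succ) - X (t k i.castSucc)) * (Y (t k i.succ) - Y (t k i.castSucc))) := by
    intro k
    have h1 : ∑ j ∈ Finset.range N, h (r j) * (F k (q (j + 1)) - F k (q j))
        = ∑ i : Fin (m k),
            (∑ j ∈ Finset.range N, h (r j) *
              ((if t k i.castSucc ≤ q (j + 1) then (1:ℝ) else 0)
                - (if t k i.castSucc ≤ q j then (1:ℝ) else 0)))
            * ((X (t k i.succ) - X (t k i.castSucc)) * (Y (t k i.succ) - Y (t k i.castSucc))) := by
      simp only [hFone, ← Finset.sum_sub_distrib, Finset.mul_sum]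
      rw [Finset.sum_comm]
      refine Finset.sum_congr rfl fun i _ => ?_
      rw [Finset.sum_mul]
      refine Finset.sum_congr rfl fun j _ => ?_
      ring
    rw [h1, ← Finset.sum_sub_distrib]
    refine Finset.sum_congr rfl fun i _ => ?_
    ring
  -- the error bound
  have hE1 : ∀ k,
      |(∑ i : Fin (m k), h (t k i.castSucc) *
        (X (t k i.succ) - X (t k i.castSucc)) * (Y (t k i.succ) - Y (t k i.castSucc)))
      - ∑ j ∈ Finset.range N, h (r j) * (F k (q (j + 1)) - F k (q j))| ≤ ε * C := by
    intro k
    rw [hdecomp k]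
    calc |∑ i : Fin (m k), _| ≤ ∑ i : Fin (m k),
        |(h (t k i.castSucc) - ∑ j ∈ Finset.range N, h (r j) *
            ((if t k i.castSucc ≤ q (j + 1) then (1:ℝ) else 0)
              - (if t k i.castSucc ≤ q j then (1:ℝ) else 0)))
          * ((X (t k i.succ) - X (t k i.castSucc)) * (Y (t k i.succ) - Y (t k i.castSucc)))| :=
        Finset.abs_sum_le_sum_abs _ _
      _ ≤ ∑ i : Fin (m k), ε *
          |(X (t k i.succ) - X (t k i.castSucc)) * (Y (t k i.succ) - Y (t k i.castSucc))| := by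
        refine Finset.sum_le_sum fun i _ => ?_
        rw [abs_mul]
        refine mul_le_mul_of_nonneg_right ?_ (abs_nonneg _)
        refine step_approx q r h (t k i.castSucc) ε hqmono ?_ ?_ ?_
        · rw [hq0]; linarith [htlow k i]
        · rw [hqN]; exact hthigh k i
        · intro j hj hl hu
          exact hstep j hj (t k i.castSucc) (htmem k i) hl hu
      _ = ε * ∑ i : Fin (m k),
          |(X (t k i.succ) - X (t k i.castSucc)) * (Y (t k i.succ) - Y (t k i.castSucc))| :=
        (Finset.mul_sum _ _ _).symm
      _ ≤ ε * C := by
        refine mul_le_mul_of_nonneg_left ?_ hεpos.le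
        calc ∑ i : Fin (m k),
            |(X (t k i.succ) - X (t k i.castSucc)) * (Y (t k i.succ) - Y (t k i.castSucc))|
            = ∑ i : Fin (m k),
              |X (t k i.succ) - X (t k i.castSucc)| * |Y (t k i.succ) - Y (t k i.castSucc)| := by
              simp only [abs_mul]
          _ ≤ C := hC k
  -- splitting off the tail term
  have hsplit : ∀ k, ∑ j ∈ Finset.range N, h (r j) * (F k (q (j + 1)) - F k (q j))
      = (∑ j ∈ Finset.range (J + 1), h (r j) * (F k (q (j + 1)) - F k (q j)))
        + h p * (F k T - F k p) := by
    intro k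
    rw [show N = (J + 1) + 1 from rfl, Finset.sum_range_succ]
    rw [hrJ1, hqJ1, show J + 1 + 1 = N from rfl, hqN]
  -- the middle sum tends to 0
  have hmid : Tendsto (fun k => ∑ j ∈ Finset.range (J + 1),
      h (r j) * (F k (q (j + 1)) - F k (q j))) atTop (nhds 0) := by
    have h1 : Tendsto (fun k => ∑ j ∈ Finset.range (J + 1),
        h (r j) * (F k (q (j + 1)) - F k (q j))) atTop
        (nhds (∑ j ∈ Finset.range (J + 1), h (r j) * ((0:ℝ) - 0))) := by
      refine tendsto_finset_sum _ fun j hj => ?_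
      have hj' := Finset.mem_range.mp hj
      exact ((hF0 (j + 1) (by omega)).sub (hF0 j (by omega))).const_mul _
    simpa using h1
  -- the tail difference
  have htail : ∀ k, F k T - F k p = ∑ i : Fin (m k),
      (if t k i.castSucc ≤ p then 0 else
        (X (t k i.succ) - X (t k i.castSucc)) * (Y (t k i.succ) - Y (t k i.castSucc))) := by
    intro k
    simp only [hFdef]
    rw [← Finset.sum_sub_distrib]
    refine Finset.sum_congr rfl fun i _ => ?_
    by_cases hi : t k i.castSucc ≤ p
    · rw [if_pos (hthigh k i), if_pos hi, if_pos hi]; ring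
    · rw [if_pos (hthigh k i), if_neg hi, if_neg hi]; ring
  -- the tail quadratic sums
  set AX : ℕ → ℝ := fun k => ∑ i : Fin (m k),
    (if t k i.castSucc ≤ p then 0 else (X (t k i.succ) - X (t k i.castSucc)) ^ 2) with hAXdef
  set AY : ℕ → ℝ := fun k => ∑ i : Fin (m k),
    (if t k i.castSucc ≤ p then 0 else (Y (t k i.succ) - Y (t k i.castSucc)) ^ 2) with hAYdef
  have hCS : ∀ k, |F k T - F k p| ≤ Real.sqrt (AX k) * Real.sqrt (AY k) := by
    intro k
    rw [htail k]
    simpa [hAXdef, hAYdef] using ite_cauchy_schwarz (fun i : Fin (m k) => t k i.castSucc ≤ p)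
      (fun i => X (t k i.succ) - X (t k i.castSucc))
      (fun i => Y (t k i.succ) - Y (t k i.castSucc))
  have hAXlim : Tendsto AX atTop (nhds (QX T - QX p)) := by
    have h1 : ∀ k, AX k =
        (∑ i : Fin (m k),
          (if t k i.castSucc ≤ T then (X (t k i.succ) - X (t k i.castSucc)) ^ 2 else 0))
        - ∑ i : Fin (m k),
          (if t k i.castSucc ≤ p then (X (t k i.succ) - X (t k i.castSucc)) ^ 2 else 0) := by
      intro k
      simp only [hAXdef]
      rw [← Finset.sum_sub_distrib]
      refine Finset.sum_congr rfl fun i _ => ?_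
      by_cases hi : t k i.castSucc ≤ p
      · rw [if_pos hi, if_pos (hthigh k i), if_pos hi]; ring
      · rw [if_neg hi, if_pos (hthigh k i), if_neg hi]; ring
    exact ((hQX T hTT).sub (hQX p hpIcc)).congr fun k => (h1 k).symm
  have hAYlim : Tendsto AY atTop (nhds (QY T - QY p)) := by
    have h1 : ∀ k, AY k =
        (∑ i : Fin (m k),
          (if t k i.castSucc ≤ T then (Y (t k i.succ) - Y (t k i.castSucc)) ^ 2 else 0))
        - ∑ i : Fin (m k),
          (if t k i.castSucc ≤ p then (Y (t k i.succ) - Y (t k i.castSucc)) ^ 2 else 0) := by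
      intro k
      simp only [hAYdef]
      rw [← Finset.sum_sub_distrib]
      refine Finset.sum_congr rfl fun i _ => ?_
      by_cases hi : t k i.castSucc ≤ p
      · rw [if_pos hi, if_pos (hthigh k i), if_pos hi]; ring
      · rw [if_neg hi, if_pos (hthigh k i), if_neg hi]; ring
    exact ((hQY T hTT).sub (hQY p hpIcc)).congr fun k => (h1 k).symm
  have hdistpT : dist p T < rX ∧ dist p T < rY := by
    rw [Real.dist_eq, abs_of_nonpos (by linarith [hpIcc.2])]
    constructor <;> linarith
  have hQXp : QX T - QX p < ε ^ 2 := by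
    have h1 := hrX hpIcc hdistpT.1
    rw [Real.dist_eq] at h1
    linarith [(abs_lt.mp h1).1]
  have hQYp : QY T - QY p < ε ^ 2 := by
    have h1 := hrY hpIcc hdistpT.2
    rw [Real.dist_eq] at h1
    linarith [(abs_lt.mp h1).1]
  have hAXev : ∀ᶠ k in atTop, AX k < ε ^ 2 := hAXlim.eventually_lt_const hQXp
  have hAYev : ∀ᶠ k in atTop, AY k < ε ^ 2 := hAYlim.eventually_lt_const hQYp
  have hmidev : ∀ᶠ k in atTop, |∑ j ∈ Finset.range (J + 1),
      h (r j) * (F k (q (j + 1)) - F k (q j))| < ε := by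
    have h1 := NormedAddCommGroup.tendsto_nhds_zero.mp hmid ε hεpos
    simpa [Real.norm_eq_abs] using h1
  -- final assembly
  filter_upwards [hmidev, hAXev, hAYev] with k h1 h2 h3
  rw [Real.norm_eq_abs]
  have e2 : |F k T - F k p| ≤ ε * ε := by
    refine (hCS k).trans ?_
    have sx : Real.sqrt (AX k) ≤ ε := by
      rw [show ε = Real.sqrt (ε ^ 2) from (Real.sqrt_sq hεpos.le).symm]
      exact Real.sqrt_le_sqrt h2.le
    have sy : Real.sqrt (AY k) ≤ ε := by
      rw [show ε = Real.sqrt (ε ^ 2) from (Real.sqrt_sq hεpos.le).symm]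
      exact Real.sqrt_le_sqrt h3.le
    exact mul_le_mul sx sy (Real.sqrt_nonneg _) hεpos.le
  have habs : |∑ i : Fin (m k), h (t k i.castSucc) *
      (X (t k i.succ) - X (t k i.castSucc)) * (Y (t k i.succ) - Y (t k i.castSucc))|
      ≤ ε * C + (ε + Mh * (ε * ε)) := by
    have hrewrite : (∑ i : Fin (m k), h (t k i.castSucc) *
        (X (t k i.succ) - X (t k i.castSucc)) * (Y (t k i.succ) - Y (t k i.castSucc)))
        = ((∑ i : Fin (m k), h (t k i.castSucc) *
            (X (t k i.succ) - X (t k i.castSucc)) * (Y (t k i.succ) - Y (t k i.castSucc)))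
          - ∑ j ∈ Finset.range N, h (r j) * (F k (q (j + 1)) - F k (q j)))
          + ((∑ j ∈ Finset.range (J + 1), h (r j) * (F k (q (j + 1)) - F k (q j)))
            + h p * (F k T - F k p)) := by
      rw [← hsplit k]; ring
    rw [hrewrite]
    refine (abs_add_le _ _).trans (add_le_add (hE1 k) ?_)
    refine (abs_add_le _ _).trans (add_le_add h1.le ?_)
    rw [abs_mul]
    exact mul_le_mul (hMhb p hpIcc) e2 (abs_nonneg _) hMhnn
  have hεK : ε ≤ ε₀ / (2 * K) := min_le_right _ _
  have hfinal : ε * C + (ε + Mh * (ε * ε)) ≤ ε * K := by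
    have hMe : Mh * (ε * ε) ≤ Mh * ε := by
      have h9 : 0 ≤ Mh * (ε * (1 - ε)) :=
        mul_nonneg hMhnn (mul_nonneg hεpos.le (sub_nonneg.mpr hε1))
      nlinarith [h9]
    calc ε * C + (ε + Mh * (ε * ε)) ≤ ε * C + (ε + Mh * ε) := by linarith
      _ = ε * K := by simp only [hKdef]; ring
  have hlast2 : ε * K ≤ ε₀ / 2 := by
    calc ε * K ≤ (ε₀ / (2 * K)) * K := mul_le_mul_of_nonneg_right hεK hKpos.le
      _ = ε₀ / 2 := by field_simp
  calc |∑ i : Fin (m k), h (t k i.castSucc) *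
      (X (t k i.succ) - X (t k i.castSucc)) * (Y (t k i.succ) - Y (t k i.castSucc))|
      ≤ ε * C + (ε + Mh * (ε * ε)) := habs
    _ ≤ ε₀ / 2 := hfinal.trans hlast2
    _ < ε₀ := by linarith
end
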